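/- Define σ² := ∫_{D∖{1}} (1−|z|²)/|1−z|² ν(dz), and for x > 0 set U_x := {z ∈ D : z ≠ 0 and 1−|z| ≤ |arg z| ≤ x} with arg z ∈ (−π,π], and for n ≥ 1 set D_n := {z = r·e^{iu} : 1−1/n ≤ r ≤ 1, |u| ≤ 1/n}. Assume σ² < ∞. Then for any constant C ≥ 0, ν(U_x)/x → C as x → 0⁺ if and only if n·ν(D_n) → C as n → ∞. -/

import Mathlib

open MeasureTheory Filter Topology Set

/-- `σ² = ∫_{D∖{1}} (1-|z|²)/|1-z|² ν(dz) ∈ [0,∞]`. -/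
noncomputable def sigmaSq (ν : Measure ℂ) : ENNReal :=
  ∫⁻ z in {z : ℂ | z ≠ 1},
    ENNReal.ofReal ((1 - ‖z‖ ^ 2) / ‖1 - z‖ ^ 2) ∂ν

/-- `U_x = {z ∈ D : z ≠ 0, 1-|z| ≤ |arg z| ≤ x}`, with `arg z ∈ (-π,π]`. -/
def Uset (x : ℝ) : Set ℂ :=
  {z : ℂ | ‖z‖ ≤ 1 ∧ z ≠ 0 ∧
    1 - ‖z‖ ≤ |Complex.arg z| ∧ |Complex.arg z| ≤ x}

/-- `D_n = {z = r e^{iu} : 1-1/n ≤ r ≤ 1, |u| ≤ 1/n}`. -/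
def Dset (n : ℕ) : Set ℂ :=
  {z : ℂ | ∃ r u : ℝ, 1 - 1 / (n : ℝ) ≤ r ∧ r ≤ 1 ∧ |u| ≤ 1 / (n : ℝ) ∧
    z = (r : ℂ) * Complex.exp (u * Complex.I)}

/-! The sets `U_{1/n}` and `D_n` differ only by the part of `D_n` where `|arg z| < 1 - |z| ≤ 1/n`,
a Stolz-type cone at `1` shrinking with `n`. On it the Poisson kernel `(1 - |z|²)/|1 - z|²` is at
least `n/2`, so `n ν(D_n ∖ U_{1/n})` is at most twice the integral of the kernel over the cone,
which tends to `0` because `σ² < ∞`. Hence `n ν(D_n)` and `n ν(U_{1/n})` have the same limits.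
Since `x ↦ ν(U_x)` is monotone, sandwiching `x` between `1/(⌊1/x⌋ + 1)` and `1/⌊1/x⌋` shows
that `ν(U_x)/x` and `n ν(U_{1/n})` have the same limits too. -/

lemma tendsto_one_div_natCast_nhdsGT_zero :
    Tendsto (fun n : ℕ => 1 / (n : ℝ)) atTop (𝓝[>] 0) := by
  simpa only [one_div, Function.comp_def] using
    tendsto_inv_atTop_nhdsGT_zero.comp tendsto_natCast_atTop_atTop

lemma tendsto_nat_floor_one_div_nhdsGT_zero :
    Tendsto (fun x : ℝ => ⌊1 / x⌋₊) (𝓝[>] 0) atTop := by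
  simpa only [one_div, Function.comp_def] using
    tendsto_nat_floor_atTop.comp tendsto_inv_nhdsGT_zero

lemma Monotone.div_mem_Icc_of_floor_one_div {φ : ℝ → ℝ} (hφ : Monotone φ) (hφ0 : 0 ≤ φ)
    {x : ℝ} (hx : x ∈ Ioc 0 1) :
    φ x / x ∈
      Icc (⌊1 / x⌋₊ * φ (1 / (⌊1 / x⌋₊ + 1))) ((⌊1 / x⌋₊ + 1) * φ (1 / ⌊1 / x⌋₊)) := by
  obtain ⟨hx0, hx1⟩ := hx
  set n := ⌊1 / x⌋₊
  have hn_le : (n : ℝ) ≤ 1 / x := Nat.floor_le (by positivity)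
  have hlt_n : 1 / x < n + 1 := Nat.lt_floor_add_one _
  have hn_pos : (0 : ℝ) < n := by
    have : 1 ≤ n := Nat.le_floor (by rw [Nat.cast_one, le_div_iff₀ hx0]; linarith)
    exact_mod_cast this
  have hx_lo : 1 / ((n : ℝ) + 1) ≤ x := by
    rw [div_le_iff₀ (by positivity)]; rw [div_lt_iff₀ hx0] at hlt_n; linarith
  have hx_hi : x ≤ 1 / (n : ℝ) := by
    rw [le_div_iff₀ hn_pos]; rw [le_div_iff₀ hx0] at hn_le; linarith
  constructor
  · calc (n : ℝ) * φ (1 / (n + 1)) ≤ 1 / x * φ x :=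
          mul_le_mul hn_le (hφ hx_lo) (hφ0 _) (by positivity)
      _ = φ x / x := by ring
  · calc φ x / x = φ x * (1 / x) := by ring
      _ ≤ φ (1 / n) * (n + 1) :=
          mul_le_mul (hφ hx_hi) hlt_n.le (by positivity) (hφ0 _)
      _ = (n + 1) * φ (1 / n) := mul_comm _ _

theorem Monotone.tendsto_div_nhdsGT_zero_iff_tendsto_nat_mul {φ : ℝ → ℝ} (hφ : Monotone φ)
    (hφ0 : 0 ≤ φ) {C : ℝ} :
    Tendsto (fun x => φ x / x) (𝓝[>] 0) (𝓝 C) ↔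
      Tendsto (fun n : ℕ => n * φ (1 / n)) atTop (𝓝 C) := by
  constructor
  · intro h
    refine (h.comp tendsto_one_div_natCast_nhdsGT_zero).congr fun n => ?_
    simp [mul_comm]
  · intro h
    have hlower : Tendsto (fun n : ℕ => n * φ (1 / (n + 1))) atTop (𝓝 C) := by
      have := (tendsto_natCast_div_add_atTop (1 : ℝ)).mul ((tendsto_add_atTop_iff_nat 1).2 h)
      rw [one_mul] at this
      refine this.congr fun n => ?_
      push_cast
      field_simp
    have hupper : Tendsto (fun n : ℕ => (n + 1) * φ (1 / n)) atTop (𝓝 C) := by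
      have := (tendsto_one_div_atTop_nhds_zero_nat.const_add (1 : ℝ)).mul h
      rw [add_zero, one_mul] at this
      refine this.congr' ?_
      filter_upwards [eventually_ne_atTop 0] with n hn
      field_simp
    refine tendsto_of_tendsto_of_tendsto_of_le_of_le'
      (hlower.comp tendsto_nat_floor_one_div_nhdsGT_zero)
      (hupper.comp tendsto_nat_floor_one_div_nhdsGT_zero) ?_ ?_
    · filter_upwards [Ioc_mem_nhdsGT zero_lt_one] with x hx
        using (hφ.div_mem_Icc_of_floor_one_div hφ0 hx).1
    · filter_upwards [Ioc_mem_nhdsGT zero_lt_one] with x hx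
        using (hφ.div_mem_Icc_of_floor_one_div hφ0 hx).2

noncomputable def poissonKernelAtOne (z : ℂ) : ℝ :=
  (1 - ‖z‖ ^ 2) / ‖1 - z‖ ^ 2

def stolzCone (ε : ℝ) : Set ℂ :=
  {z : ℂ | ‖z‖ ≤ 1 ∧ |Complex.arg z| < 1 - ‖z‖ ∧ 1 - ‖z‖ ≤ ε}

lemma measurable_poissonKernelAtOne : Measurable poissonKernelAtOne := by
  unfold poissonKernelAtOne; fun_prop

lemma measurableSet_Uset (x : ℝ) : MeasurableSet (Uset x) := by
  have harg : Measurable fun z : ℂ => |Complex.arg z| := Complex.measurable_arg.abs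
  simp only [Uset, ofPred_and]
  exact (measurableSet_le (by fun_prop) measurable_const).inter
    ((measurableSet_singleton 0).compl.inter
      ((measurableSet_le (by fun_prop) harg).inter (measurableSet_le harg measurable_const)))

lemma measurableSet_stolzCone (ε : ℝ) : MeasurableSet (stolzCone ε) := by
  have harg : Measurable fun z : ℂ => |Complex.arg z| := Complex.measurable_arg.abs
  simp only [stolzCone, ofPred_and]
  exact (measurableSet_le (by fun_prop) measurable_const).inter
    ((measurableSet_lt harg (by fun_prop)).inter (measurableSet_le (by fun_prop) measurable_const))

lemma Uset_mono {x y : ℝ} (h : x ≤ y) : Uset x ⊆ Uset y :=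
  fun _ hz => ⟨hz.1, hz.2.1, hz.2.2.1, hz.2.2.2.trans h⟩

lemma Uset_subset_Dset (n : ℕ) : Uset (1 / n) ⊆ Dset n := fun z ⟨h1, _, h3, h4⟩ =>
  ⟨‖z‖, Complex.arg z, by linarith, h1, h4, (Complex.norm_mul_exp_arg_mul_I z).symm⟩

lemma norm_and_abs_arg_of_mem_Dset {n : ℕ} (hn : 2 ≤ n) {z : ℂ} (hz : z ∈ Dset n) :
    1 - 1 / (n : ℝ) ≤ ‖z‖ ∧ ‖z‖ ≤ 1 ∧ |Complex.arg z| ≤ 1 / n := by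
  obtain ⟨r, u, hr1, hr2, hu, rfl⟩ := hz
  have hn_inv : 1 / (n : ℝ) ≤ 1 / 2 := one_div_le_one_div_of_le two_pos (by exact_mod_cast hn)
  have hr0 : 0 < r := by linarith
  have hu_pi : u ∈ Ioc (-Real.pi) Real.pi := by
    have := abs_le.mp hu; constructor <;> linarith [Real.pi_gt_three]
  rw [Complex.exp_mul_I, Complex.arg_mul_cos_add_sin_mul_I hr0 hu_pi, ← Complex.exp_mul_I,
    norm_mul, Complex.norm_exp_ofReal_mul_I, mul_one, Complex.norm_of_nonneg hr0.le]
  exact ⟨hr1, hr2, hu⟩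

lemma Dset_diff_Uset_subset_stolzCone {n : ℕ} (hn : 2 ≤ n) :
    Dset n \ Uset (1 / n) ⊆ stolzCone (1 / n) := by
  rintro z ⟨hD, hU⟩
  obtain ⟨h1, h2, h3⟩ := norm_and_abs_arg_of_mem_Dset hn hD
  have hz0 : z ≠ 0 := by
    rintro rfl
    have : 1 / (n : ℝ) < 1 := by
      rw [div_lt_one (by positivity)]; exact_mod_cast hn
    rw [norm_zero] at h1; linarith
  have harg : |Complex.arg z| < 1 - ‖z‖ := not_le.mp fun h => hU ⟨h2, hz0, h, h3⟩
  exact ⟨h2, harg, by linarith⟩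

lemma stolzCone_mono {ε δ : ℝ} (h : ε ≤ δ) : stolzCone ε ⊆ stolzCone δ :=
  fun _ hz => ⟨hz.1, hz.2.1, hz.2.2.trans h⟩

lemma stolzCone_subset_ne_one (ε : ℝ) : stolzCone ε ⊆ {z : ℂ | z ≠ 1} := by
  rintro z ⟨-, h, -⟩ rfl
  simp at h

lemma biInter_stolzCone : ⋂ ε > (0 : ℝ), stolzCone ε = ∅ := by
  refine eq_empty_of_forall_notMem fun z hz => ?_
  have hpos : 0 < 1 - ‖z‖ := (abs_nonneg _).trans_lt (mem_iInter₂.mp hz 1 one_pos).2.1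
  have := (mem_iInter₂.mp hz _ (half_pos hpos)).2.2
  linarith

lemma norm_one_sub_sq_le_of_abs_arg_le {z : ℂ} (hz : ‖z‖ ≤ 1)
    (harg : |Complex.arg z| ≤ 1 - ‖z‖) :
    ‖1 - z‖ ^ 2 ≤ 2 * (1 - ‖z‖) ^ 2 := by
  set r := ‖z‖
  set u := Complex.arg z
  have hr0 : 0 ≤ r := norm_nonneg z
  have hsq : ‖1 - z‖ ^ 2 = (1 - r) ^ 2 + 2 * r * (1 - Real.cos u) := by
    rw [Complex.sq_norm, Complex.normSq_apply, Complex.sub_re, Complex.sub_im,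
      Complex.one_re, Complex.one_im, ← Complex.norm_mul_cos_arg, ← Complex.norm_mul_sin_arg]
    linear_combination r ^ 2 * Real.sin_sq_add_cos_sq u
  have hcos : 1 - Real.cos u ≤ u ^ 2 / 2 := by linarith [Real.one_sub_sq_div_two_le_cos (x := u)]
  have hu2 : u ^ 2 ≤ (1 - r) ^ 2 := sq_le_sq' (abs_le.mp harg).1 (abs_le.mp harg).2
  rw [hsq]
  nlinarith [mul_le_mul_of_nonneg_left hcos (by positivity : 0 ≤ 2 * r)]

lemma one_div_two_mul_le_poissonKernelAtOne {ε : ℝ} {z : ℂ} (hz : z ∈ stolzCone ε) :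
    1 / (2 * ε) ≤ poissonKernelAtOne z := by
  obtain ⟨h1, harg, hε⟩ := hz
  have hpos : 0 < 1 - ‖z‖ := (abs_nonneg _).trans_lt harg
  have hε_pos : 0 < ε := hpos.trans_le hε
  have hden := norm_one_sub_sq_le_of_abs_arg_le h1 harg.le
  have hden_pos : 0 < ‖1 - z‖ ^ 2 := by
    have : 1 - z ≠ 0 := sub_ne_zero.mpr fun h => by simp [← h] at hpos
    positivity
  calc 1 / (2 * ε) ≤ (1 - ‖z‖) / (2 * (1 - ‖z‖) ^ 2) := by
        rw [div_le_div_iff₀ (by positivity) (by positivity)]; nlinarith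
    _ ≤ (1 - ‖z‖ ^ 2) / (2 * (1 - ‖z‖) ^ 2) := by
        gcongr; nlinarith [norm_nonneg z]
    _ ≤ poissonKernelAtOne z :=
        div_le_div_of_nonneg_left (by nlinarith [norm_nonneg z]) hden_pos hden

lemma tendsto_setLIntegral_stolzCone {ν : Measure ℂ} (hσ : sigmaSq ν < ⊤) :
    Tendsto (fun ε => ∫⁻ z in stolzCone ε, ENNReal.ofReal (poissonKernelAtOne z) ∂ν)
      (𝓝[>] 0) (𝓝 0) := by
  have hfin : ∫⁻ z in stolzCone 1, ENNReal.ofReal (poissonKernelAtOne z) ∂ν ≠ ⊤ :=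
    ne_top_of_le_ne_top hσ.ne (lintegral_mono_set (stolzCone_subset_ne_one 1))
  have h := tendsto_measure_biInter_gt
    (μ := ν.withDensity fun z => ENNReal.ofReal (poissonKernelAtOne z))
    (fun ε _ => (measurableSet_stolzCone ε).nullMeasurableSet)
    (fun _ _ _ h => stolzCone_mono h)
    ⟨1, one_pos, by rwa [withDensity_apply _ (measurableSet_stolzCone 1)]⟩
  rw [biInter_stolzCone, measure_empty] at h
  simpa only [Function.comp_def, withDensity_apply _ (measurableSet_stolzCone _)] using h

lemma nat_mul_measure_stolzCone_le {ν : Measure ℂ} (n : ℕ) :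
    n * ν (stolzCone (1 / n)) ≤
      2 * ∫⁻ z in stolzCone (1 / n), ENNReal.ofReal (poissonKernelAtOne z) ∂ν := by
  calc (n : ENNReal) * ν (stolzCone (1 / n))
      = 2 * (ENNReal.ofReal (1 / (2 * (1 / n))) * ν (stolzCone (1 / n))) := by
        have h2n : (2 : ℝ) * (1 / (2 * (1 / n))) = n := by field_simp
        rw [← mul_assoc, ← ENNReal.ofReal_ofNat 2, ← ENNReal.ofReal_mul zero_le_two, h2n,
          ENNReal.ofReal_natCast]
    _ ≤ 2 * ∫⁻ z in stolzCone (1 / n), ENNReal.ofReal (poissonKernelAtOne z) ∂ν := by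
        rw [← setLIntegral_const]
        gcongr 2 * ?_
        exact setLIntegral_mono measurable_poissonKernelAtOne.ennreal_ofReal fun z hz =>
          ENNReal.ofReal_le_ofReal (one_div_two_mul_le_poissonKernelAtOne hz)

lemma tendsto_nat_mul_measure_Dset_diff_Uset {ν : Measure ℂ} (hσ : sigmaSq ν < ⊤) :
    Tendsto (fun n : ℕ => n * (ν (Dset n \ Uset (1 / n))).toReal) atTop (𝓝 0) := by
  have hI := ENNReal.Tendsto.const_mul
    ((tendsto_setLIntegral_stolzCone hσ).comp tendsto_one_div_natCast_nhdsGT_zero)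
    (Or.inr (ENNReal.ofNat_ne_top (n := 2)))
  rw [mul_zero] at hI
  have h : Tendsto (fun n : ℕ => n * ν (Dset n \ Uset (1 / n))) atTop (𝓝 0) := by
    refine tendsto_of_tendsto_of_tendsto_of_le_of_le' tendsto_const_nhds hI
      (Eventually.of_forall fun _ => zero_le) ?_
    filter_upwards [eventually_ge_atTop 2] with n hn
    exact (mul_le_mul_right (measure_mono (Dset_diff_Uset_subset_stolzCone hn)) _).trans
      (nat_mul_measure_stolzCone_le n)
  simpa only [ENNReal.toReal_mul, ENNReal.toReal_natCast, ENNReal.toReal_zero,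
    Function.comp_def] using (ENNReal.tendsto_toReal ENNReal.zero_ne_top).comp h

theorem nu_Ux_regular_iff_n_nu_Dn
    (ν : Measure ℂ) [IsFiniteMeasure ν]
    (hσ : sigmaSq ν < ⊤) (C : ℝ) :
    Tendsto (fun x : ℝ => (ν (Uset x)).toReal / x) (𝓝[>] (0:ℝ)) (𝓝 C) ↔
      Tendsto (fun n : ℕ => (n : ℝ) * (ν (Dset n)).toReal) atTop (𝓝 C) := by
  have hmono : Monotone fun x => (ν (Uset x)).toReal := fun _ _ h =>
    ENNReal.toReal_mono (measure_ne_top ν _) (measure_mono (Uset_mono h))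
  rw [hmono.tendsto_div_nhdsGT_zero_iff_tendsto_nat_mul fun _ => ENNReal.toReal_nonneg]
  refine tendsto_iff_of_dist ((tendsto_nat_mul_measure_Dset_diff_Uset hσ).congr fun n => ?_)
  have hD : ν (Dset n) = ν (Uset (1 / n)) + ν (Dset n \ Uset (1 / n)) := by
    rw [measure_add_sdiff (measurableSet_Uset _).nullMeasurableSet,
      union_eq_right.mpr (Uset_subset_Dset n)]
  rw [hD, ENNReal.toReal_add (measure_ne_top ν _) (measure_ne_top ν _), Real.dist_eq, mul_add,
    sub_add_cancel_left, abs_neg, abs_of_nonneg (by positivity)]
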